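/- Let 𝔤 = 𝔤_{3.2} ⊕ 𝔤₁ be the 4-dimensional real Lie algebra with basis e₁,...,e₄ and nonzero brackets [e₂,e₃] = e₁ − e₂ and [e₃,e₁] = e₁. A 4×4 real matrix R equals η·Id + D for some η ∈ ℝ and some derivation D of 𝔤 if and only if R₂₁ = R₃₁ = R₄₁ = 0, R₃₂ = R₄₂ = 0, R₁₄ = R₂₄ = R₃₄ = 0, and R₂₂ = R₁₁. In this case η = R₃₃. -/

import Mathlib

open Matrix

/-- The Lie bracket of the Lie algebra, in coordinates. -/
def br (x y : Fin 4 → ℝ) : Fin 4 → ℝ :=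
  ![(x 1 * y 2 - x 2 * y 1) + (x 2 * y 0 - x 0 * y 2), -(x 1 * y 2 - x 2 * y 1), (0:ℝ), (0:ℝ)]

/-- `D` (acting via `mulVec`) is a derivation of the bracket. -/
def IsDer (D : Matrix (Fin 4) (Fin 4) ℝ) : Prop :=
  ∀ x y : Fin 4 → ℝ, D.mulVec (br x y) = br (D.mulVec x) y + br x (D.mulVec y)

/-!
Evaluating the derivation identity on pairs of basis vectors shows that the derivations of `𝔤`
are exactly the matrices with `D₂₁ = D₃₁ = D₄₁ = D₃₂ = D₄₂ = D₁₄ = D₂₄ = D₃₄ = 0`, `D₂₂ = D₁₁`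
and `D₃₃ = 0`. Hence `R - η • 1` is a derivation iff `R` satisfies the first nine conditions and
`η = R₃₃`.
-/

lemma IsDer.apply_single {D : Matrix (Fin 4) (Fin 4) ℝ} (hD : IsDer D) (i j : Fin 4) :
    D *ᵥ br (Pi.single i 1) (Pi.single j 1) =
      br (D.col i) (Pi.single j 1) + br (Pi.single i 1) (D.col j) := by
  simpa [mulVec_single_one] using hD (Pi.single i 1) (Pi.single j 1)

lemma isDer_iff (D : Matrix (Fin 4) (Fin 4) ℝ) :
    IsDer D ↔ D 1 0 = 0 ∧ D 2 0 = 0 ∧ D 3 0 = 0 ∧ D 2 1 = 0 ∧ D 3 1 = 0 ∧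
      D 0 3 = 0 ∧ D 1 3 = 0 ∧ D 2 3 = 0 ∧ D 1 1 = D 0 0 ∧ D 2 2 = 0 := by
  constructor
  · intro hD
    have e01 := hD.apply_single 0 1
    have e02 := hD.apply_single 0 2
    have e12 := hD.apply_single 1 2
    have e03 := hD.apply_single 0 3
    have e23 := hD.apply_single 2 3
    simp only [br, Fin.isValue, ne_eq, one_ne_zero, not_false_eq_true, Pi.single_eq_of_ne,
      Fin.reduceEq, mul_zero, Pi.single_eq_same, mul_one, sub_self, zero_ne_one, add_zero, neg_zero,
      col_apply, zero_sub, neg_neg, zero_mul, one_mul, zero_add, add_cons, head_cons, tail_cons,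
      empty_add_empty, funext_iff, mulVec, dotProduct, Fin.sum_univ_four, cons_val_zero,
      cons_val_one, cons_val, Fin.forall_fin_succ, cons_val_succ, cons_val_fin_one, implies_true,
      and_self, and_true, sub_zero, mul_neg, Fin.succ_zero_eq_one, Fin.succ_one_eq_two, neg_eq_zero,
      Fin.reduceSucc, IsEmpty.forall_iff, true_and, zero_eq_neg] at e01 e02 e12 e03 e23
    refine ⟨?_, ?_, ?_, ?_, ?_, ?_, ?_, ?_, ?_, ?_⟩ <;> linarith
  · rintro ⟨h10, h20, h30, h21, h31, h03, h13, h23, h11, h22⟩ x y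
    ext i
    fin_cases i <;>
      simp [br, mulVec, dotProduct, Fin.sum_univ_four, h10, h20, h30, h21, h31, h03, h13, h23, h11, h22] <;>
      ring

lemma isDer_sub_smul_one_iff (R : Matrix (Fin 4) (Fin 4) ℝ) (η : ℝ) :
    IsDer (R - η • 1) ↔ (R 1 0 = 0 ∧ R 2 0 = 0 ∧ R 3 0 = 0 ∧ R 2 1 = 0 ∧ R 3 1 = 0 ∧
      R 0 3 = 0 ∧ R 1 3 = 0 ∧ R 2 3 = 0 ∧ R 1 1 = R 0 0) ∧ η = R 2 2 := by
  simp [isDer_iff, one_apply, sub_eq_zero, eq_comm (a := η), and_assoc]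

theorem stmt_3 (R : Matrix (Fin 4) (Fin 4) ℝ) :
    ((∃ (η : ℝ) (D : Matrix (Fin 4) (Fin 4) ℝ), IsDer D ∧
        R = η • (1 : Matrix (Fin 4) (Fin 4) ℝ) + D) ↔
      (R 1 0 = 0 ∧ R 2 0 = 0 ∧ R 3 0 = 0 ∧ R 2 1 = 0 ∧ R 3 1 = 0 ∧ R 0 3 = 0 ∧ R 1 3 = 0 ∧ R 2 3 = 0 ∧ R 1 1 = R 0 0)) ∧
    (∀ (η : ℝ) (D : Matrix (Fin 4) (Fin 4) ℝ), IsDer D →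
      R = η • (1 : Matrix (Fin 4) (Fin 4) ℝ) + D → η = R 2 2) := by
  have decompose : ∀ (η : ℝ) (D : Matrix (Fin 4) (Fin 4) ℝ),
      IsDer D → R = η • 1 + D → IsDer (R - η • 1) := by
    rintro η D hD rfl
    simpa using hD
  refine ⟨⟨?_, fun h => ⟨R 2 2, _, (isDer_sub_smul_one_iff R _).2 ⟨h, rfl⟩, by abel⟩⟩, ?_⟩
  · rintro ⟨η, D, hD, hR⟩
    exact ((isDer_sub_smul_one_iff R η).1 (decompose η D hD hR)).1
  · intro η D hD hR
    exact ((isDer_sub_smul_one_iff R η).1 (decompose η D hD hR)).2
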